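/- Fix a vertex μ. Let F = fE be a nonzero antinef divisor with factorization vector f̂, and let G be an antinef divisor. Then for every vertex ν of Γ, λ(G, f̂_{⟨f̂⟩}·V·E; ν) ≥ λ(G, fE; ν), and equality holds exactly when either d(μ,ν) ≤ 1, or f̂_j = 0 for every j ∈ Γ^i_ν, where i is the vertex of the path [μ,ν] adjacent to μ. -/

import Mathlib

open Matrix BigOperators

open scoped Classical

noncomputable section

/-- Proximity data of a dual graph on vertex set `Fin N`, built from a single
root vertex by a finite sequence of elementary modifications. Vertices are
ordered by creation; each new vertex is proximate to at most two existing
(earlier) vertices, which must be adjacent to each other at that time if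
there are two of them. -/
structure DualGraph where
  N : ℕ
  Npos : 0 < N
  prox : Fin N → Fin N → Prop
  prox_lt : ∀ {μ ν}, prox μ ν → ν < μ
  prox_card : ∀ μ, {ν | prox μ ν}.ncard ≤ 2
  prox_nonempty : ∀ μ : Fin N, 0 < (μ : ℕ) → ∃ ν, prox μ ν
  prox_pair : ∀ {μ a b}, prox μ a → prox μ b → a ≠ b →
      (prox a b ∨ prox b a) ∧ ∀ ρ, ρ < μ → ¬(prox ρ a ∧ prox ρ b)

namespace DualGraph

variable (G : DualGraph)

/-- The proximity matrix `P`. -/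
def P : Matrix (Fin G.N) (Fin G.N) ℚ :=
  fun μ ν => if μ = ν then 1 else if G.prox μ ν then -1 else 0

/-- `Q = P⁻¹`. -/
def Q : Matrix (Fin G.N) (Fin G.N) ℚ := (G.P)⁻¹

/-- The valuation matrix `V = (PᵀP)⁻¹`. -/
def V : Matrix (Fin G.N) (Fin G.N) ℚ := (G.Pᵀ * G.P)⁻¹

/-- Adjacency in the dual graph: `μ ∼ ν` iff `(PᵀP)_{μν} = -1`. -/
def adj (μ ν : Fin G.N) : Prop := μ ≠ ν ∧ (G.Pᵀ * G.P) μ ν = -1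

lemma adj_symm {μ ν : Fin G.N} (h : G.adj μ ν) : G.adj ν μ := by
  obtain ⟨hne, h2⟩ := h
  refine ⟨hne.symm, ?_⟩
  have ht : (G.Pᵀ * G.P)ᵀ = G.Pᵀ * G.P := by
    rw [Matrix.transpose_mul, Matrix.transpose_transpose]
  calc (G.Pᵀ * G.P) ν μ = (G.Pᵀ * G.P)ᵀ μ ν := rfl
    _ = (G.Pᵀ * G.P) μ ν := by rw [ht]
    _ = -1 := h2

/-- The dual graph as a simple graph. -/
def graph : SimpleGraph (Fin G.N) where
  Adj := G.adj
  symm := ⟨fun _ _ h => G.adj_symm h⟩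
  loopless := ⟨fun μ h => h.1 rfl⟩

/-- The graph distance `d(μ,ν)`. -/
def dist (μ ν : Fin G.N) : ℕ := G.graph.dist μ ν

/-- The set of vertices on the unique path `[μ,γ]` from `μ` to `γ`. -/
def pathSet (μ γ : Fin G.N) : Finset (Fin G.N) :=
  Finset.univ.filter (fun ν => G.dist μ ν + G.dist ν γ = G.dist μ γ)

/-- The branch `Γ^μ_ν` emanating from `μ` towards `ν`: the maximal connected
subgraph of `Γ` containing `ν` but not `μ` (with `Γ^μ_μ = ∅`). -/
def branch (μ ν : Fin G.N) : Finset (Fin G.N) :=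
  Finset.univ.filter (fun η => ν ≠ μ ∧ η ≠ μ ∧ μ ∉ G.pathSet ν η)

/-- The set of vertices adjacent to `μ`. -/
def nbrs (μ : Fin G.N) : Finset (Fin G.N) := Finset.univ.filter (fun ν => G.adj μ ν)

/-- The valence `v_Γ(μ)`: the number of vertices adjacent to `μ`. -/
def valence (μ : Fin G.N) : ℕ := (G.nbrs μ).card

/-- The weight `w_Γ(μ) = (PᵀP)_{μμ}`. -/
def w (μ : Fin G.N) : ℚ := (G.Pᵀ * G.P) μ μ

/-- The canonical vector `k`, `k_ν = Σ_μ q_{νμ}`. -/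
def kvec : Fin G.N → ℚ := fun ν => ∑ μ, G.Q ν μ

/-- A divisor with valuation vector `f` is antinef iff its factorization
vector `f̂ = f PᵀP` is nonnegative. -/
def Antinef (f : Fin G.N → ℚ) : Prop := ∀ ν, 0 ≤ (f ᵥ* (G.Pᵀ * G.P)) ν

/-- `λ(fE, gE; ν) = (f_ν + k_ν + 1)/g_ν` for divisors with valuation
vectors `f`, `g`. -/
def lamDiv (f g : Fin G.N → ℚ) (ν : Fin G.N) : ℚ := (f ν + G.kvec ν + 1) / g ν

/-- `ρ_{[μ,γ]}(ν) = V_{γν}/V_{μν}`. -/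
def rho (μ γ ν : Fin G.N) : ℚ := G.V γ ν / G.V μ ν

/-- `r̂_{[μ,γ]} = 𝟙_γ − ρ_{[μ,γ]}(μ)·𝟙_μ`. -/
def rhat (μ γ : Fin G.N) : Fin G.N → ℚ :=
  fun j => (if j = γ then 1 else 0) - G.rho μ γ μ * (if j = μ then 1 else 0)

/-- `φ_η^{[μ,γ]}(ν) = (r̂_{[μ,γ]}V)_ν / V_{ην}`. -/
def phi (η μ γ ν : Fin G.N) : ℚ := (G.rhat μ γ ᵥ* G.V) ν / G.V η ν

/-- The transform `f̂_{⟨ĝ⟩[ĥ]}` relative to the vertex `μ`. -/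
def transform (μ : Fin G.N) (fh gh hh : Fin G.N → ℚ) : Fin G.N → ℚ :=
  fh - (∑ i ∈ G.nbrs μ, ∑ j ∈ G.branch μ i, gh j • G.rhat i j)
     + ∑ i ∈ G.nbrs μ, hh i • G.rhat μ i

/-- The transform `f̂^𝒩 = f̂ − Σ_i f̂_i·r̂_{[μ,i]}` relative to the vertex `μ`. -/
def nmap (μ : Fin G.N) (fh : Fin G.N → ℚ) : Fin G.N → ℚ :=
  fh - ∑ i, fh i • G.rhat μ i

/-- A vertex is free if it is proximate to at most one vertex. -/
def Free (μ : Fin G.N) : Prop := {ν | G.prox μ ν}.ncard ≤ 1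

/-- `μ` is infinitely near to `ν` (written `ν ⊂ μ`): the reflexive-transitive
closure of proximity. -/
def InfNear (μ ν : Fin G.N) : Prop := Relation.ReflTransGen G.prox μ ν

/-- The root vertex. -/
def root : Fin G.N := ⟨0, G.Npos⟩

/-- The branch `Γ^μ_ν` is anterior to `μ` if `μ` is infinitely near to some of
its vertices; otherwise it is posterior. -/
def Anterior (μ ν : Fin G.N) : Prop := ∃ η ∈ G.branch μ ν, G.InfNear μ η

/-- The pair `(γ,τ)` associated to `μ`. -/
def PairAssociated (γ τ μ : Fin G.N) : Prop :=
  G.InfNear τ γ ∧ G.InfNear μ τ ∧ G.Free τ ∧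
  (∀ ν, G.Free ν → G.InfNear μ ν → G.InfNear τ ν) ∧
  ((¬ G.Free γ ∧ ∀ ν, ¬ G.Free ν → G.InfNear τ ν → G.InfNear γ ν) ∨
   ((∀ ν, G.InfNear τ ν → G.Free ν) ∧ γ = G.root))

/-- The entries of `V` as natural numbers (they are positive integers). -/
def Vnat (μ ν : Fin G.N) : ℕ := (G.V μ ν).num.toNat

/-- The submonoid `SV^μ_ν` of `ℕ` generated by `{V_{μi} : i ∈ Γ^μ_ν ∪ {μ}}`. -/
def SVb (μ ν : Fin G.N) : AddSubmonoid ℕ :=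
  AddSubmonoid.closure ↑((insert μ (G.branch μ ν)).image (G.Vnat μ))

/-- `s^μ_ν = gcd{V_{μi} : i ∈ Γ^μ_ν ∪ {μ}}`. -/
def sgcd (μ ν : Fin G.N) : ℕ := (insert μ (G.branch μ ν)).gcd (G.Vnat μ)

/-- The submonoid `S^μ` of `ℕ` generated by the `s^μ_ν`, `ν ∈ Γ`. -/
def Ssg (μ : Fin G.N) : AddSubmonoid ℕ :=
  AddSubmonoid.closure (Set.range (fun ν => G.sgcd μ ν))

/-- The valuation vector `d = d̂V` of the ideal with factorization vector `d̂`. -/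
def dval (dh : Fin G.N → ℕ) : Fin G.N → ℚ := (fun i => (dh i : ℚ)) ᵥ* G.V

/-- `λ(a,ν) = (a + k_ν + 1)/d_ν`. -/
def lamA (dh : Fin G.N → ℕ) (a : ℚ) (ν : Fin G.N) : ℚ :=
  (a + G.kvec ν + 1) / G.dval dh ν

/-- The set of jumping numbers of the ideal with factorization vector `d̂`
supported at the vertex `μ`. -/
def Hset (dh : Fin G.N → ℕ) (μ : Fin G.N) : Set ℚ :=
  { ξ | ∃ f : Fin G.N → ℤ, G.Antinef (fun i => (f i : ℚ)) ∧
      (∀ ν, G.lamA dh (f μ : ℚ) μ ≤ G.lamA dh (f ν : ℚ) ν) ∧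
      ξ = G.lamA dh (f μ : ℚ) μ }

end DualGraph
end

/-!
Put `M = PᵀP`, so that `V = M⁻¹`, and `W i x y = V x y - V x i * V i y / V i i = (r̂_{[i,x]} V)_y`.
The valuation vector of `f̂_{⟨f̂⟩}` is `f - T` with `T_ν = ∑_{i ∼ μ} ∑_{j ∈ Γ^μ_i} f̂_j W i j ν`, so
`λ(G, ·; ν)` compares `(g_ν + k_ν + 1) / (f_ν - T_ν)` with `(g_ν + k_ν + 1) / f_ν`.

`Γ` is a tree: it is connected, and
`∑_μ v_Γ(μ) = tr M - 𝟙ᵀM𝟙 = ∑_ρ (∑_a P_{ρa}² - (∑_a P_{ρa})²) = 2(N - 1)`.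
`M` is positive definite with off-diagonal entries `0` or `-1`, and off the vertex `i` the matrix
`W i` inverts `M` with row and column `i` deleted. Hence `W i x ν ≥ 0` (maximum principle), with
equality exactly when `i` separates `x` from `ν`. In a tree only the neighbour `i` of `μ` on `[μ,ν]`
contributes to `T_ν`, so `0 ≤ T_ν < f_ν`, and `T_ν = 0` exactly when `f̂` vanishes on `Γ^i_ν`.
-/

namespace Matrix

variable {n R : Type*} [Fintype n] [CommRing R] [StarRing R] [TrivialStar R]
  {A : Matrix n n R} {u : n → R}

lemma PosDef.eq_zero_of_mulVec_eq_zero [PartialOrder R] (hA : A.PosDef)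
    (hu : ∀ a, u a ≠ 0 → (A *ᵥ u) a = 0) : u = 0 := by
  by_contra hne
  have hpos := hA.dotProduct_mulVec_pos hne
  have hzero : u ⬝ᵥ (A *ᵥ u) = 0 :=
    Finset.sum_eq_zero fun a _ => by by_cases h : u a = 0 <;> simp [h, hu]
  simp [star_trivial, hzero] at hpos

/-- The negative part `u⁻` of `u` satisfies `u⁻ᵀ A u⁻ ≤ u⁻ᵀ A u ≤ 0`. -/
lemma PosDef.nonneg_of_mulVec_nonneg [LinearOrder R] [IsStrictOrderedRing R] (hA : A.PosDef)
    (hoff : ∀ a b, a ≠ b → A a b ≤ 0) (hu : ∀ a, u a < 0 → 0 ≤ (A *ᵥ u) a) : 0 ≤ u := by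
  set neg : n → R := fun a => min (u a) 0
  set pos : n → R := fun a => max (u a) 0
  have hsplit : u = neg + pos := funext fun a => by simp [neg, pos, min_add_max]
  have hnegu : neg ⬝ᵥ (A *ᵥ u) ≤ 0 := Finset.sum_nonpos fun a _ => by
    by_cases ha : u a < 0
    · exact mul_nonpos_of_nonpos_of_nonneg (min_le_right _ _) (hu a ha)
    · simp [neg, min_eq_right (not_lt.1 ha)]
  have hnegpos : 0 ≤ neg ⬝ᵥ (A *ᵥ pos) := Finset.sum_nonneg fun a _ => by
    simp only [mulVec, dotProduct, Finset.mul_sum]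
    refine Finset.sum_nonneg fun b _ => ?_
    by_cases hab : a = b
    · subst hab
      rcases le_total (u a) 0 with h | h <;> simp [neg, pos, h]
    · exact mul_nonneg_of_nonpos_of_nonpos (min_le_right _ _)
        (mul_nonpos_of_nonpos_of_nonneg (hoff a b hab) (le_max_right _ _))
  have hneg : neg = 0 := by
    by_contra hne
    have hpos := hA.dotProduct_mulVec_pos hne
    rw [hsplit, mulVec_add, dotProduct_add] at hnegu
    simp only [star_trivial] at hpos
    linarith
  exact fun a => by simpa [neg] using congrFun hneg a

end Matrix

namespace SimpleGraph

variable {V : Type*} {G : SimpleGraph V} {i i' j x y z : V}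

def Separates (G : SimpleGraph V) (i x y : V) : Prop := ∀ w : G.Walk x y, i ∈ w.support

lemma separates_left (i y : V) : G.Separates i i y := fun w => w.start_mem_support

lemma separates_right (i x : V) : G.Separates i x i := fun w => w.end_mem_support

lemma Separates.symm (h : G.Separates i x y) : G.Separates i y x := fun w => by
  simpa using h w.reverse

lemma not_separates_iff : ¬ G.Separates i x y ↔ ∃ w : G.Walk x y, i ∉ w.support := by
  simp [Separates]

lemma not_separates_trans (hxy : ¬ G.Separates i x y) (hyz : ¬ G.Separates i y z) :
    ¬ G.Separates i x z := by
  obtain ⟨p, hp⟩ := not_separates_iff.1 hxy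
  obtain ⟨q, hq⟩ := not_separates_iff.1 hyz
  refine not_separates_iff.2 ⟨p.append q, fun hi => ?_⟩
  rcases (Walk.mem_support_append_iff _ _).1 hi with hi | hi
  exacts [hp hi, hq hi]

lemma not_separates_self (hx : x ≠ i) : ¬ G.Separates i x x :=
  not_separates_iff.2 ⟨Walk.nil, by simpa using hx.symm⟩

lemma not_separates_of_adj (hxy : G.Adj x y) (hx : x ≠ i) (hy : y ≠ i) :
    ¬ G.Separates i x y :=
  not_separates_iff.2 ⟨Walk.cons hxy Walk.nil, by simp [hx.symm, hy.symm]⟩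

lemma Separates.dist_add_dist (hG : G.Connected) (h : G.Separates i x y) :
    G.dist x i + G.dist i y = G.dist x y := by
  obtain ⟨w, hw⟩ := hG.exists_walk_length_eq_dist x y
  have hlen := congrArg Walk.length (w.take_spec (h w))
  rw [Walk.length_append] at hlen
  have := dist_le (w.takeUntil i (h w))
  have := dist_le (w.dropUntil i (h w))
  have := hG.dist_triangle (u := x) (v := i) (w := y)
  omega

lemma IsAcyclic.separates_of_mem_support (hG : G.IsAcyclic) {p : G.Walk x y} (hp : p.IsPath)
    (hi : i ∈ p.support) : G.Separates i x y := fun w => by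
  have hw : w.bypass = p :=
    congrArg Subtype.val ((hG.subsingleton_path x y).elim ⟨_, w.bypass_isPath⟩ ⟨p, hp⟩)
  exact w.support_bypass_subset_support (hw ▸ hi)

lemma IsAcyclic.separates_of_adj_of_not_separates (hG : G.IsAcyclic) (hi : G.Adj x i)
    (h : ¬ G.Separates x i y) : G.Separates i x y := by
  obtain ⟨w, hw⟩ := not_separates_iff.1 h
  have hpath : (Walk.cons hi w.bypass).IsPath :=
    w.bypass_isPath.cons fun h => hw (w.support_bypass_subset_support h)
  exact hG.separates_of_mem_support hpath (by simp)

lemma IsTree.separates_iff_dist_add_dist (hG : G.IsTree) :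
    G.Separates i x y ↔ G.dist x i + G.dist i y = G.dist x y := by
  refine ⟨Separates.dist_add_dist hG.connected, fun h => ?_⟩
  obtain ⟨p, hp⟩ := hG.connected.exists_walk_length_eq_dist x i
  obtain ⟨q, hq⟩ := hG.connected.exists_walk_length_eq_dist i y
  refine hG.isAcyclic.separates_of_mem_support ((p.append q).isPath_of_length_eq_dist ?_)
    (by simp)
  rw [Walk.length_append]
  omega

lemma IsTree.exists_adj_separates (hG : G.IsTree) (h : x ≠ y) :
    ∃ i, G.Adj x i ∧ G.Separates i x y := by
  obtain ⟨p, hp, -⟩ := hG.connected.exists_path_of_dist x y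
  exact ⟨p.snd, Walk.adj_snd (Walk.not_nil_of_ne h),
    hG.isAcyclic.separates_of_mem_support hp (p.getVert_mem_support 1)⟩

lemma IsTree.eq_of_adj_of_separates (hG : G.IsTree) (hi : G.Adj x i) (hi' : G.Adj x i')
    (h : G.Separates i x y) (h' : G.Separates i' x y) : i = i' := by
  obtain ⟨p, hp, -⟩ := hG.connected.exists_path_of_dist x y
  rw [hG.isAcyclic.eq_snd_of_adj_start hp hi (h p), hG.isAcyclic.eq_snd_of_adj_start hp hi' (h' p)]

lemma IsTree.not_separates_of_adj_of_separates (hG : G.IsTree) (hi : G.Adj x i)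
    (h : G.Separates i x y) : ¬ G.Separates x i y := fun h' => by
  have := h.dist_add_dist hG.connected
  have := h'.dist_add_dist hG.connected
  have := dist_eq_one_iff_adj.2 hi
  have := dist_comm (G := G) (u := i) (v := x)
  omega

end SimpleGraph

lemma div_le_div_sub_and_eq_iff {K : Type*} [Field K] [LinearOrder K] [IsStrictOrderedRing K]
    {a b t : K} (ha : 0 < a) (ht : 0 ≤ t) (htb : t < b) :
    a / b ≤ a / (b - t) ∧ (a / (b - t) = a / b ↔ t = 0) := by
  refine ⟨div_le_div_of_nonneg_left ha.le (sub_pos.2 htb) (sub_le_self b ht),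
    fun h => ?_, fun h => by rw [h, sub_zero]⟩
  rw [div_eq_div_iff (sub_pos.2 htb).ne' (ht.trans_lt htb).ne'] at h
  linarith [mul_left_cancel₀ ha.ne' h]

noncomputable section

namespace DualGraph

open Finset SimpleGraph

variable {G : DualGraph}

lemma prox_irrefl (μ : Fin G.N) : ¬ G.prox μ μ := fun h => lt_irrefl _ (G.prox_lt h)

lemma not_prox_of_prox {μ ν : Fin G.N} (h : G.prox μ ν) : ¬ G.prox ν μ :=
  fun h' => lt_asymm (G.prox_lt h) (G.prox_lt h')

lemma P_apply (μ ν : Fin G.N) :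
    G.P μ ν = (if μ = ν then 1 else 0) - if G.prox μ ν then 1 else 0 := by
  by_cases h : μ = ν
  · subst h; simp [P, prox_irrefl]
  · by_cases hp : G.prox μ ν <;> simp [P, h, hp]

lemma det_P : G.P.det = 1 := by
  rw [Matrix.det_of_isLowerTriangular _ fun μ ν (h : μ < ν) => ?_]
  · simp [P_apply, prox_irrefl]
  · simpa [P_apply, h.ne] using fun hp => lt_asymm h (G.prox_lt hp)

lemma P_mul_Q : G.P * G.Q = 1 := Matrix.mul_nonsing_inv _ (by simp [det_P])

lemma Q_apply (μ ρ : Fin G.N) :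
    G.Q μ ρ = (if μ = ρ then 1 else 0) + ∑ σ with G.prox μ σ, G.Q σ ρ := by
  have h := congrFun (congrFun (P_mul_Q (G := G)) μ) ρ
  simp only [Matrix.mul_apply, P_apply, sub_mul, ite_mul, one_mul, zero_mul, sum_sub_distrib,
    sum_ite_eq, mem_univ, if_true, ← sum_filter, Matrix.one_apply] at h
  linarith

lemma Q_eq_zero_of_lt {μ ρ : Fin G.N} (h : μ < ρ) : G.Q μ ρ = 0 := by
  induction μ using WellFoundedLT.induction with
  | _ μ ih =>
    rw [Q_apply, if_neg h.ne, zero_add]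
    exact sum_eq_zero fun σ hσ =>
      have hσμ := G.prox_lt (mem_filter.1 hσ).2
      ih σ hσμ (hσμ.trans h)

lemma Q_nonneg (μ ρ : Fin G.N) : 0 ≤ G.Q μ ρ := by
  induction μ using WellFoundedLT.induction with
  | _ μ ih =>
    rw [Q_apply]
    exact add_nonneg (by positivity) (sum_nonneg fun σ hσ => ih σ (G.prox_lt (mem_filter.1 hσ).2))

lemma Q_apply_self (μ : Fin G.N) : G.Q μ μ = 1 := by
  rw [Q_apply, if_pos rfl, add_eq_left]
  exact sum_eq_zero fun σ hσ => Q_eq_zero_of_lt (G.prox_lt (mem_filter.1 hσ).2)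

lemma val_pos_of_ne_root {μ : Fin G.N} (h : μ ≠ G.root) : 0 < (μ : ℕ) :=
  Nat.pos_of_ne_zero fun h0 => h (Fin.ext h0)

lemma one_le_Q_root (μ : Fin G.N) : 1 ≤ G.Q μ G.root := by
  induction μ using WellFoundedLT.induction with
  | _ μ ih =>
    by_cases h : μ = G.root
    · rw [h, Q_apply_self]
    obtain ⟨σ, hσ⟩ := G.prox_nonempty μ (val_pos_of_ne_root h)
    rw [Q_apply, if_neg h, zero_add]
    exact (ih σ (G.prox_lt hσ)).trans
      (single_le_sum (fun σ _ => Q_nonneg σ G.root) (mem_filter.2 ⟨mem_univ σ, hσ⟩))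

lemma one_le_kvec (ν : Fin G.N) : 1 ≤ G.kvec ν :=
  (Q_apply_self ν).symm.le.trans (single_le_sum (fun μ _ => Q_nonneg ν μ) (mem_univ ν))

lemma V_apply (a b : Fin G.N) : G.V a b = ∑ ρ, G.Q a ρ * G.Q b ρ := by
  have hV : G.V = G.Q * G.Qᵀ := by
    rw [V, Matrix.mul_inv_rev, ← Matrix.transpose_nonsing_inv, Q]
  simp [hV, Matrix.mul_apply]

lemma V_symm (a b : Fin G.N) : G.V a b = G.V b a := by
  simp only [V_apply, mul_comm]

lemma one_le_V (a b : Fin G.N) : 1 ≤ G.V a b := by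
  rw [V_apply]
  exact (one_le_mul_of_one_le_of_one_le (one_le_Q_root a) (one_le_Q_root b)).trans
    (single_le_sum (fun ρ _ => mul_nonneg (Q_nonneg a ρ) (Q_nonneg b ρ)) (mem_univ G.root))

lemma V_pos (a b : Fin G.N) : 0 < G.V a b := one_pos.trans_le (one_le_V a b)

def M (G : DualGraph) : Matrix (Fin G.N) (Fin G.N) ℚ := G.Pᵀ * G.P

lemma M_mul_V : G.M * G.V = 1 := Matrix.mul_nonsing_inv _ (by simp [M, det_P])

lemma M_apply (a b : Fin G.N) : G.M a b = ∑ ρ, G.P ρ a * G.P ρ b := by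
  simp [M, Matrix.mul_apply]

lemma M_posDef : G.M.PosDef := by
  have hP : Function.Injective G.P.mulVec :=
    Matrix.mulVec_injective_iff_isUnit.2 ((Matrix.isUnit_iff_isUnit_det _).2 (by simp [det_P]))
  have := Matrix.PosDef.conjTranspose_mul_self G.P hP
  rwa [Matrix.conjTranspose_eq_transpose_of_trivial] at this

lemma adj_iff {μ ν : Fin G.N} : G.adj μ ν ↔ μ ≠ ν ∧ G.M μ ν = -1 := Iff.rfl

lemma graph_adj {μ ν : Fin G.N} : G.graph.Adj μ ν ↔ G.adj μ ν := Iff.rfl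

lemma mem_nbrs {μ ν : Fin G.N} : ν ∈ G.nbrs μ ↔ G.adj μ ν := by simp [nbrs]

def commonProx (G : DualGraph) (μ ν : Fin G.N) : Finset (Fin G.N) :=
  {ρ | G.prox ρ μ ∧ G.prox ρ ν}

lemma card_commonProx_le_one {μ ν : Fin G.N} (h : μ ≠ ν) : #(G.commonProx μ ν) ≤ 1 := by
  refine card_le_one.2 fun a ha b hb => ?_
  simp only [commonProx, mem_filter, mem_univ, true_and] at ha hb
  by_contra hab
  rcases lt_or_gt_of_ne hab with hlt | hlt
  · exact (G.prox_pair hb.1 hb.2 h).2 a hlt ha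
  · exact (G.prox_pair ha.1 ha.2 h).2 b hlt hb

lemma M_apply_of_ne {μ ν : Fin G.N} (h : μ ≠ ν) :
    G.M μ ν = #(G.commonProx μ ν) - (if G.prox μ ν then 1 else 0)
      - (if G.prox ν μ then 1 else 0) := by
  have hterm (ρ : Fin G.N) : G.P ρ μ * G.P ρ ν = (if ρ ∈ G.commonProx μ ν then 1 else 0)
      - (if ρ = μ then if G.prox μ ν then 1 else 0 else 0)
      - (if ρ = ν then if G.prox ν μ then 1 else 0 else 0) := by
    by_cases hμ : ρ = μ
    · subst hμ; simp [P_apply, commonProx, h, prox_irrefl]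
    by_cases hν : ρ = ν
    · subst hν; simp [P_apply, commonProx, hμ, prox_irrefl]
    simp only [P_apply, commonProx, mem_filter, mem_univ, true_and, if_neg hμ, if_neg hν]
    split_ifs <;> simp_all
  simp [M_apply, hterm, sum_sub_distrib]

lemma M_apply_of_ne_eq_zero_or {μ ν : Fin G.N} (h : μ ≠ ν) :
    G.M μ ν = 0 ∨ G.M μ ν = -1 := by
  rw [M_apply_of_ne h]
  rcases Nat.le_one_iff_eq_zero_or_eq_one.1 (card_commonProx_le_one h) with hc | hc
  · by_cases hμν : G.prox μ ν
    · simp [hc, hμν, not_prox_of_prox hμν]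
    · by_cases hνμ : G.prox ν μ <;> simp [hc, hμν, hνμ]
  · obtain ⟨ρ, hρ⟩ := card_eq_one.1 hc
    have hρ' : G.prox ρ μ ∧ G.prox ρ ν := by
      have hmem : ρ ∈ G.commonProx μ ν := hρ ▸ mem_singleton_self ρ
      simpa [commonProx] using hmem
    rcases (G.prox_pair hρ'.1 hρ'.2 h).1 with hμν | hνμ
    · simp [hc, hμν, not_prox_of_prox hμν]
    · simp [hc, hνμ, not_prox_of_prox hνμ]

lemma M_apply_eq_zero_of_not_adj {μ ν : Fin G.N} (h : μ ≠ ν) (hn : ¬ G.adj μ ν) :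
    G.M μ ν = 0 :=
  (M_apply_of_ne_eq_zero_or h).resolve_right fun h' => hn ⟨h, h'⟩

lemma M_apply_nonpos {μ ν : Fin G.N} (h : μ ≠ ν) : G.M μ ν ≤ 0 := by
  rcases M_apply_of_ne_eq_zero_or h with h' | h' <;> simp [h']

lemma adj_or_exists_prox_prox {μ a : Fin G.N} (h : G.prox μ a) :
    G.adj μ a ∨ ∃ ρ, G.prox ρ μ ∧ G.prox ρ a := by
  have hμa : μ ≠ a := fun e => prox_irrefl a (e ▸ h)
  rcases (G.commonProx μ a).eq_empty_or_nonempty with hc | ⟨ρ, hρ⟩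
  · exact Or.inl (adj_iff.2 ⟨hμa, by simp [M_apply_of_ne hμa, hc, h, not_prox_of_prox h]⟩)
  · exact Or.inr ⟨ρ, by simpa [commonProx] using hρ⟩

lemma reachable_of_prox {μ a : Fin G.N} (h : G.prox μ a) : G.graph.Reachable μ a := by
  induction μ using WellFoundedGT.induction generalizing a with
  | _ μ ih =>
    rcases adj_or_exists_prox_prox h with hadj | ⟨ρ, hρμ, hρa⟩
    · exact (graph_adj.2 hadj).reachable
    · exact (ih ρ (G.prox_lt hρμ) hρμ).symm.trans (ih ρ (G.prox_lt hρμ) hρa)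

lemma graph_connected : G.graph.Connected := by
  have hroot (ν : Fin G.N) : G.graph.Reachable ν G.root := by
    induction ν using WellFoundedLT.induction with
    | _ ν ih =>
      by_cases h : ν = G.root
      · rw [h]
      obtain ⟨a, ha⟩ := G.prox_nonempty ν (val_pos_of_ne_root h)
      exact (reachable_of_prox ha).trans (ih a (G.prox_lt ha))
  exact (SimpleGraph.connected_iff _).2
    ⟨fun u v => (hroot u).trans (hroot v).symm, ⟨G.root⟩⟩

lemma sum_M_mul (ρ : Fin G.N) (h : Fin G.N → ℚ) :
    ∑ σ, G.M ρ σ * h σ = G.M ρ ρ * h ρ - ∑ σ ∈ G.nbrs ρ, h σ := by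
  have hterm (σ : Fin G.N) : G.M ρ σ * h σ
      = (if σ = ρ then G.M ρ ρ * h ρ else 0) - if G.adj ρ σ then h σ else 0 := by
    by_cases hσ : σ = ρ
    · subst hσ; simp [adj_iff]
    by_cases ha : G.adj ρ σ
    · simp [hσ, ha, (adj_iff.1 ha).2]
    · simp [hσ, ha, M_apply_eq_zero_of_not_adj (Ne.symm hσ) ha]
  rw [sum_congr rfl fun σ _ => hterm σ]
  simp [sum_sub_distrib, nbrs, sum_filter]

lemma sum_P_row (ρ : Fin G.N) : ∑ a, G.P ρ a = 1 - #{a | G.prox ρ a} := by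
  simp [P_apply, sum_sub_distrib, sum_boole]

lemma sum_P_row_sq (ρ : Fin G.N) : ∑ a, G.P ρ a ^ 2 = 1 + #{a | G.prox ρ a} := by
  have hterm (a : Fin G.N) :
      G.P ρ a ^ 2 = (if ρ = a then 1 else 0) + if G.prox ρ a then 1 else 0 := by
    by_cases h : ρ = a
    · subst h; simp [P_apply, prox_irrefl]
    · by_cases hp : G.prox ρ a <;> simp [P_apply, h, hp]
  simp [hterm, sum_add_distrib, sum_boole]

lemma sum_P_row_sq_sub_sq (ρ : Fin G.N) :
    ∑ a, G.P ρ a ^ 2 - (∑ a, G.P ρ a) ^ 2 = if ρ = G.root then 0 else 2 := by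
  rw [sum_P_row_sq, sum_P_row]
  have hcard : #{a | G.prox ρ a} = ({a | G.prox ρ a} : Set (Fin G.N)).ncard := by
    rw [Set.ncard_eq_toFinset_card']; simp
  split_ifs with h
  · have h0 : #{a | G.prox ρ a} = 0 := by
      simp only [card_eq_zero, filter_eq_empty_iff, mem_univ, true_implies]
      exact fun a ha => Nat.not_lt_zero _ (h ▸ G.prox_lt ha)
    simp [h0]
  · have h1 : 1 ≤ #{a | G.prox ρ a} := by
      obtain ⟨a, ha⟩ := G.prox_nonempty ρ (val_pos_of_ne_root h)
      exact card_pos.2 ⟨a, by simp [ha]⟩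
    have h2 := hcard ▸ G.prox_card ρ
    rcases (by omega : #{a | G.prox ρ a} = 1 ∨ #{a | G.prox ρ a} = 2) with hc | hc <;>
      norm_num [hc]

lemma sum_card_nbrs : ∑ μ, (#(G.nbrs μ) : ℚ) = 2 * (G.N - 1) := by
  have hdiag : ∑ μ, G.M μ μ = ∑ ρ, ∑ a, G.P ρ a ^ 2 := by
    simp only [M_apply, sq]; exact sum_comm
  have htotal : ∑ μ, ∑ ν, G.M μ ν = ∑ ρ, (∑ a, G.P ρ a) ^ 2 := calc
    _ = ∑ μ, ∑ ρ, ∑ ν, G.P ρ μ * G.P ρ ν := by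
      simp only [M_apply]; exact sum_congr rfl fun _ _ => sum_comm
    _ = _ := by rw [sum_comm]; simp only [sq, sum_mul_sum]
  have hrow (μ : Fin G.N) : (#(G.nbrs μ) : ℚ) = G.M μ μ - ∑ ν, G.M μ ν := by
    have := sum_M_mul μ 1
    simp only [Pi.one_apply, mul_one, sum_const, nsmul_eq_mul] at this
    linarith
  simp only [hrow, sum_sub_distrib, hdiag, htotal]
  rw [← sum_sub_distrib, sum_congr rfl fun ρ _ => sum_P_row_sq_sub_sq ρ, sum_ite,
    sum_const_zero, zero_add, sum_const, filter_ne', card_erase_of_mem (mem_univ _), card_fin,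
    nsmul_eq_mul, Nat.cast_sub G.Npos]
  ring

lemma graph_isTree : G.graph.IsTree := by
  refine isTree_iff_connected_and_card.2 ⟨graph_connected, ?_⟩
  have hdeg (μ : Fin G.N) : G.graph.degree μ = #(G.nbrs μ) := by
    rw [← card_neighborFinset_eq_degree, neighborFinset_eq_filter]; rfl
  have hedges : (2 * #G.graph.edgeFinset : ℚ) = 2 * (G.N - 1) := by
    rw [← sum_card_nbrs]
    exact_mod_cast (G.graph.sum_degrees_eq_twice_card_edges).symm.trans (by simp [hdeg])
  rw [Nat.card_eq_fintype_card, ← edgeFinset_card, Nat.card_eq_fintype_card,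
    Fintype.card_fin]
  have := G.Npos
  have : (#G.graph.edgeFinset : ℚ) + 1 = G.N := by linarith
  exact_mod_cast this

section Branch

variable {i j x y μ ν : Fin G.N}

lemma mem_pathSet_iff : i ∈ G.pathSet x y ↔ G.graph.Separates i x y := by
  rw [pathSet, mem_filter, graph_isTree.separates_iff_dist_add_dist]
  simp [DualGraph.dist]

lemma mem_branch_iff : j ∈ G.branch μ i ↔ i ≠ μ ∧ j ≠ μ ∧ ¬ G.graph.Separates μ i j := by
  simp [branch, mem_pathSet_iff]

lemma separates_of_mem_branch (hi : G.adj μ i) (hj : j ∈ G.branch μ i) :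
    G.graph.Separates i μ j :=
  graph_isTree.isAcyclic.separates_of_adj_of_not_separates hi (mem_branch_iff.1 hj).2.2

lemma separates_of_mem_branch_of_not_separates (hi : G.adj μ i) (hj : j ∈ G.branch μ i)
    (hν : ¬ G.graph.Separates i μ ν) : G.graph.Separates i j ν := by
  by_contra hjν
  exact not_separates_trans hjν (fun h => hν h.symm) (separates_of_mem_branch hi hj).symm

lemma mem_branch_and_not_separates_iff (hi : G.adj μ i) (h : G.graph.Separates i μ ν) :
    j ∈ G.branch μ i ∧ ¬ G.graph.Separates i j ν ↔ j ∈ G.branch i ν := by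
  simp only [mem_branch_iff]
  constructor
  · rintro ⟨-, hjν⟩
    exact ⟨fun e => hjν (e ▸ separates_right (G := G.graph) i j),
      fun e => hjν (e ▸ separates_left (G := G.graph) i ν),
      fun h' => hjν h'.symm⟩
  · rintro ⟨hνi, hji, hνj⟩
    refine ⟨⟨hi.1.symm, fun e => hνj (e ▸ h.symm), ?_⟩, fun h' => hνj h'.symm⟩
    -- a walk from `ν` to `j` avoiding `i` also avoids `μ`, since `i` separates `μ` from `ν`
    refine not_separates_trans (graph_isTree.not_separates_of_adj_of_separates hi h) fun hμ => ?_
    obtain ⟨q, hq⟩ := not_separates_iff.1 hνj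
    exact hq (q.support_takeUntil_subset_support (hμ q) (h.symm (q.takeUntil μ (hμ q))))

end Branch

def W (G : DualGraph) (i x y : Fin G.N) : ℚ := G.V x y - G.V x i * G.V i y / G.V i i

section W

variable {i x y ν ρ : Fin G.N}

lemma W_symm (i x y : Fin G.N) : G.W i x y = G.W i y x := by
  simp only [W, V_symm x y, V_symm x i, V_symm i y, mul_comm]

lemma W_self_left (i y : Fin G.N) : G.W i i y = 0 := by
  simp [W, (V_pos i i).ne']

lemma W_self_right (i x : Fin G.N) : G.W i x i = 0 := by
  rw [W_symm, W_self_left]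

lemma W_lt_V (i x y : Fin G.N) : G.W i x y < G.V x y := by
  have := V_pos x i; have := V_pos i y; have := V_pos i i
  simp only [W, sub_lt_self_iff]
  positivity

lemma M_mulVec_V (ρ ν : Fin G.N) :
    (G.M *ᵥ fun σ => G.V σ ν) ρ = if ρ = ν then 1 else 0 := by
  simpa [Matrix.mul_apply, Matrix.mulVec, dotProduct, Matrix.one_apply] using
    congrFun (congrFun (M_mul_V (G := G)) ρ) ν

lemma M_mulVec_W (hρ : ρ ≠ i) :
    (G.M *ᵥ fun σ => G.W i σ ν) ρ = if ρ = ν then 1 else 0 := by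
  have hcol : (fun σ => G.W i σ ν)
      = (fun σ => G.V σ ν) - (G.V i ν / G.V i i) • fun σ => G.V σ i := by
    ext σ; simp only [W, Pi.sub_apply, Pi.smul_apply, smul_eq_mul]; ring
  rw [hcol, Matrix.mulVec_sub, Matrix.mulVec_smul, Pi.sub_apply, Pi.smul_apply, M_mulVec_V,
    M_mulVec_V, if_neg hρ, smul_zero, sub_zero]

lemma M_apply_self_mul_W (hρ : ρ ≠ i) :
    G.M ρ ρ * G.W i ρ ν = (if ρ = ν then 1 else 0) + ∑ σ ∈ G.nbrs ρ, G.W i σ ν := by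
  have h := M_mulVec_W (ν := ν) hρ
  rw [Matrix.mulVec, dotProduct, sum_M_mul] at h
  linarith

lemma W_nonneg (i x ν : Fin G.N) : 0 ≤ G.W i x ν := by
  refine M_posDef.nonneg_of_mulVec_nonneg (fun a b hab => M_apply_nonpos hab)
    (u := fun σ => G.W i σ ν) (fun a ha => ?_) x
  have hai : a ≠ i := fun e => ha.ne (by rw [e, W_self_left])
  rw [M_mulVec_W hai]
  positivity

/-- The restriction of `W i · x` to the side of `i` containing `ν` is annihilated by `M` there,
hence vanishes. -/
lemma W_eq_zero_of_separates (h : G.graph.Separates i x ν) : G.W i x ν = 0 := by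
  by_cases hνi : ν = i
  · rw [hνi, W_self_right]
  set u : Fin G.N → ℚ := fun ρ => if G.graph.Separates i ν ρ then 0 else G.W i ρ x
  suffices hu : u = 0 by
    simpa [u, not_separates_self hνi, W_symm i ν x] using congrFun hu ν
  refine M_posDef.eq_zero_of_mulVec_eq_zero fun β hβu => ?_
  have hβ : ¬ G.graph.Separates i ν β := fun hs => hβu (by simp [u, hs])
  have hβi : β ≠ i := fun e => hβ (e ▸ separates_right (G := G.graph) i ν)
  have hβx : β ≠ x := fun e => hβ (e ▸ h.symm)
  have hterm (σ : Fin G.N) : G.M β σ * u σ = G.M β σ * G.W i σ x := by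
    by_cases hσ : G.graph.Separates i ν σ
    · by_cases hσi : σ = i
      · simp [u, hσi, W_self_left]
      have hnadj : ¬ G.adj β σ := fun hadj =>
        not_separates_trans hβ (not_separates_of_adj (graph_adj.2 hadj) hβi hσi) hσ
      simp [u, hσ, M_apply_eq_zero_of_not_adj (fun e : β = σ => hβ (e ▸ hσ)) hnadj]
    · simp [u, hσ]
  simp only [Matrix.mulVec, dotProduct, hterm]
  simpa [Matrix.mulVec, dotProduct, hβx] using M_mulVec_W (ν := x) hβi

lemma W_pos_of_walk (w : G.graph.Walk x y) (hw : i ∉ w.support) : 0 < G.W i x y := by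
  induction w with
  | @nil x =>
    have hxi : x ≠ i := fun e => hw (by simp [e])
    refine pos_of_mul_pos_right (a := G.M x x) ?_ M_posDef.diag_pos.le
    rw [M_apply_self_mul_W hxi, if_pos rfl]
    exact add_pos_of_pos_of_nonneg one_pos (sum_nonneg fun σ _ => W_nonneg i σ _)
  | @cons x v y hadj w ih =>
    have hxi : x ≠ i := fun e => hw (by simp [e])
    have hv := ih fun h => hw (by simp [h])
    refine pos_of_mul_pos_right (a := G.M x x) ?_ M_posDef.diag_pos.le
    rw [M_apply_self_mul_W hxi]
    exact add_pos_of_nonneg_of_pos (by positivity) (hv.trans_le (single_le_sum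
      (fun σ _ => W_nonneg i σ y) (mem_nbrs.2 (graph_adj.1 hadj))))

lemma W_eq_zero_iff : G.W i x ν = 0 ↔ G.graph.Separates i x ν := by
  refine ⟨fun h0 => ?_, W_eq_zero_of_separates⟩
  by_contra h
  obtain ⟨w, hw⟩ := not_separates_iff.1 h
  exact (W_pos_of_walk w hw).ne' h0

end W

lemma Antinef.nonneg {g : Fin G.N → ℚ} (hg : G.Antinef g) (ν : Fin G.N) : 0 ≤ g ν := by
  have hg' : g = (g ᵥ* G.M) ᵥ* G.V := by rw [Matrix.vecMul_vecMul, M_mul_V, Matrix.vecMul_one]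
  rw [hg']
  exact sum_nonneg fun σ _ => mul_nonneg (hg σ) (V_pos σ ν).le

lemma vecMul_rhat_V (i j ν : Fin G.N) : (G.rhat i j ᵥ* G.V) ν = G.W i j ν := by
  simp only [Matrix.vecMul, dotProduct, rhat, rho, sub_mul, ite_mul, one_mul, zero_mul,
    mul_ite, mul_one, mul_zero, sum_sub_distrib, sum_ite_eq', mem_univ, if_true, W, V_symm i ν]
  ring

lemma vecMul_V_transform (μ : Fin G.N) (fh : Fin G.N → ℚ) (ν : Fin G.N) :
    (G.transform μ fh fh 0 ᵥ* G.V) ν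
      = (fh ᵥ* G.V) ν - ∑ i ∈ G.nbrs μ, ∑ j ∈ G.branch μ i, fh j * G.W i j ν := by
  simp only [transform, Pi.zero_apply, zero_smul, sum_const_zero, add_zero, Matrix.sub_vecMul,
    Matrix.sum_vecMul, Matrix.smul_vecMul, Pi.sub_apply, Finset.sum_apply, Pi.smul_apply,
    smul_eq_mul, vecMul_rhat_V]

section Transform

variable (μ ν : Fin G.N) {fh : Fin G.N → ℚ}

lemma sum_branch_W_eq_zero_of_not_separates {i : Fin G.N} (hi : G.adj μ i)
    (hν : ¬ G.graph.Separates i μ ν) : ∑ j ∈ G.branch μ i, fh j * G.W i j ν = 0 :=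
  sum_eq_zero fun j hj => by
    rw [W_eq_zero_of_separates (separates_of_mem_branch_of_not_separates hi hj hν), mul_zero]

lemma sum_mul_W_lt_vecMul_V (hf : ∀ j, 0 ≤ fh j) (hfh : fh ≠ 0) (i : Fin G.N)
    (B : Finset (Fin G.N)) : ∑ j ∈ B, fh j * G.W i j ν < (fh ᵥ* G.V) ν := by
  obtain ⟨j₀, hj₀⟩ := Function.ne_iff.1 hfh
  have hj₀pos : 0 < fh j₀ := (hf j₀).lt_of_ne' hj₀
  rw [← univ_inter B, ← sum_ite_mem]
  refine sum_lt_sum (fun j _ => ?_) ⟨j₀, mem_univ _, ?_⟩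
  · split_ifs
    · exact mul_le_mul_of_nonneg_left (W_lt_V i j ν).le (hf j)
    · exact mul_nonneg (hf j) (V_pos j ν).le
  · split_ifs
    · exact mul_lt_mul_of_pos_left (W_lt_V i j₀ ν) hj₀pos
    · exact mul_pos hj₀pos (V_pos j₀ ν)

lemma sum_branch_W_nonneg (hf : ∀ j, 0 ≤ fh j) :
    0 ≤ ∑ i ∈ G.nbrs μ, ∑ j ∈ G.branch μ i, fh j * G.W i j ν :=
  sum_nonneg fun i _ => sum_nonneg fun j _ => mul_nonneg (hf j) (W_nonneg i j ν)

lemma sum_branch_W_lt (hf : ∀ j, 0 ≤ fh j) (hfh : fh ≠ 0) :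
    ∑ i ∈ G.nbrs μ, ∑ j ∈ G.branch μ i, fh j * G.W i j ν < (fh ᵥ* G.V) ν := by
  by_cases h : ∃ i₀, G.adj μ i₀ ∧ G.graph.Separates i₀ μ ν
  · obtain ⟨i₀, hi₀, hsep⟩ := h
    rw [sum_eq_single_of_mem i₀ (mem_nbrs.2 hi₀) fun i hi hne =>
      sum_branch_W_eq_zero_of_not_separates μ ν (mem_nbrs.1 hi)
        fun hs => hne (graph_isTree.eq_of_adj_of_separates (mem_nbrs.1 hi) hi₀ hs hsep)]
    exact sum_mul_W_lt_vecMul_V ν hf hfh i₀ _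
  · simp only [not_exists, not_and] at h
    rw [sum_eq_zero fun i hi =>
      sum_branch_W_eq_zero_of_not_separates μ ν (mem_nbrs.1 hi) (h i (mem_nbrs.1 hi))]
    simpa using sum_mul_W_lt_vecMul_V ν hf hfh μ ∅

lemma sum_branch_W_eq_zero_iff (hf : ∀ j, 0 ≤ fh j) :
    ∑ i ∈ G.nbrs μ, ∑ j ∈ G.branch μ i, fh j * G.W i j ν = 0 ↔
      ∀ i, G.adj μ i → G.graph.Separates i μ ν → ∀ j ∈ G.branch i ν, fh j = 0 := by
  rw [sum_eq_zero_iff_of_nonneg fun i _ =>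
    sum_nonneg fun j _ => mul_nonneg (hf j) (W_nonneg i j ν)]
  refine forall_congr' fun i => ?_
  rw [mem_nbrs]
  refine imp_congr_right fun hi => ?_
  by_cases hsep : G.graph.Separates i μ ν
  · rw [sum_eq_zero_iff_of_nonneg fun j _ => mul_nonneg (hf j) (W_nonneg i j ν)]
    simp only [mul_eq_zero, W_eq_zero_iff, ← mem_branch_and_not_separates_iff hi hsep, hsep,
      true_implies]
    exact forall_congr' fun j => by tauto
  · simp [hsep, sum_branch_W_eq_zero_of_not_separates μ ν hi hsep]

end Transform

lemma forall_adj_separates_iff {μ ν : Fin G.N} {p : Fin G.N → Prop} :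
    (∀ i, G.adj μ i → G.graph.Separates i μ ν → ∀ j ∈ G.branch i ν, p j) ↔
      (G.dist μ ν ≤ 1 ∨ ∃ i ∈ G.pathSet μ ν, G.adj μ i ∧ ∀ j ∈ G.branch i ν, p j) := by
  constructor
  · intro h
    by_cases hd : G.dist μ ν ≤ 1
    · exact Or.inl hd
    have hμν : μ ≠ ν := fun e => hd (by simp [e, DualGraph.dist])
    obtain ⟨i, hi, hsep⟩ := graph_isTree.exists_adj_separates hμν
    exact Or.inr ⟨i, mem_pathSet_iff.2 hsep, hi, h i hi hsep⟩
  · rintro (hd | ⟨i, hpath, hi, hp⟩) i' hi' hsep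
    · have := hsep.dist_add_dist graph_connected
      have := dist_eq_one_iff_adj.2 (graph_adj.2 hi')
      have hνi' : i' = ν :=
        graph_connected.dist_eq_zero_iff.1 (by unfold DualGraph.dist at hd; omega)
      intro j hj
      exact absurd hνi'.symm (mem_branch_iff.1 hj).1
    · rwa [graph_isTree.eq_of_adj_of_separates hi' hi hsep (mem_pathSet_iff.1 hpath)]

end DualGraph

end

/-- For a nonzero antinef divisor `F = fE` and an antinef divisor `G`,
`λ(G, f̂_{⟨f̂⟩}V·E; ν) ≥ λ(G, fE; ν)` with equality exactly when `d(μ,ν) ≤ 1`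
or `f̂_j = 0` for every `j ∈ Γ^i_ν`, `i` being the vertex of `[μ,ν]`
adjacent to `μ`. -/
theorem stmt8 (G : DualGraph) (μ : Fin G.N) (fh : Fin G.N → ℚ)
    (hfh : fh ≠ 0) (hanti : ∀ ν, 0 ≤ fh ν)
    (g : Fin G.N → ℚ) (hg : G.Antinef g) :
    ∀ ν, G.lamDiv g (G.transform μ fh fh 0 ᵥ* G.V) ν ≥ G.lamDiv g (fh ᵥ* G.V) ν ∧
      (G.lamDiv g (G.transform μ fh fh 0 ᵥ* G.V) ν = G.lamDiv g (fh ᵥ* G.V) ν ↔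
        (G.dist μ ν ≤ 1 ∨
          ∃ i ∈ G.pathSet μ ν, G.adj μ i ∧ ∀ j ∈ G.branch i ν, fh j = 0)) := by
  intro ν
  have hnum : 0 < g ν + G.kvec ν + 1 := by
    linarith [hg.nonneg ν, DualGraph.one_le_kvec (G := G) ν]
  obtain ⟨hle, heq⟩ := div_le_div_sub_and_eq_iff hnum (G.sum_branch_W_nonneg μ ν hanti)
    (G.sum_branch_W_lt μ ν hanti hfh)
  simp only [DualGraph.lamDiv, DualGraph.vecMul_V_transform, ge_iff_le]
  exact ⟨hle, heq.trans ((G.sum_branch_W_eq_zero_iff μ ν hanti).trans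
    DualGraph.forall_adj_separates_iff)⟩
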